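/- Let ((Δ_i)_{i≥0}, (ψ_i)_{i≥0}) be a 1-parameter formal deformation of a Coder pair (C, ψ_C). Then the pair (Δ_1, ψ_1) is a 2-cocycle of the Coder-pair complex of (C, ψ_C) with coefficients in the coadjoint bicomodule: δ_c(Δ_1) = 0 and δ_c(ψ_1) + ω(Δ_1) = 0. -/

import Mathlib

/-!
Writing `Δ_t = Σ Δ_i tⁱ` and `ψ_t = Σ ψ_i tⁱ`, the coefficient of `t` in the coassociativity of
`Δ_t` and in the coderivation identity for `ψ_t` becomes, after substituting `Δ_0 = Δ` and
`ψ_0 = ψ_C`, a rearrangement of `δ_c(Δ_1) = 0` and `δ_c(ψ_1) + ω(Δ_1) = 0` respectively.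
-/

open TensorProduct LinearMap

variable {k C : Type} [Field k] [AddCommGroup C] [Module k C]

/-- `δ_c(g) = (Id_C ⊗ g) ∘ Δ − Δ ∘ g + (g ⊗ Id_C) ∘ Δ` for `g ∈ Hom(C, C)`
(coadjoint coefficients). -/
noncomputable def delta1 (Δ : C →ₗ[k] C ⊗[k] C) (g : C →ₗ[k] C) : C →ₗ[k] C ⊗[k] C :=
  LinearMap.lTensor C g ∘ₗ Δ - Δ ∘ₗ g + LinearMap.rTensor C g ∘ₗ Δ

/-- `δ_c(f) = (Id_C ⊗ f) ∘ Δ − (Δ ⊗ Id_C) ∘ f + (Id_C ⊗ Δ) ∘ f − (f ⊗ Id_C) ∘ Δ`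
for `f ∈ Hom(C, C ⊗ C)` (coadjoint coefficients). -/
noncomputable def delta2 (Δ : C →ₗ[k] C ⊗[k] C) (f : C →ₗ[k] C ⊗[k] C) :
    C →ₗ[k] C ⊗[k] (C ⊗[k] C) :=
  LinearMap.lTensor C f ∘ₗ Δ
    - (TensorProduct.assoc k C C C).toLinearMap ∘ₗ LinearMap.rTensor C Δ ∘ₗ f
    + LinearMap.lTensor C Δ ∘ₗ f
    - (TensorProduct.assoc k C C C).toLinearMap ∘ₗ LinearMap.rTensor C f ∘ₗ Δ

/-- `ω(g) = ψ_C ∘ g − g ∘ ψ_C` for `g ∈ Hom(C, C)`. -/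
noncomputable def omega1 (ψC : C →ₗ[k] C) (g : C →ₗ[k] C) : C →ₗ[k] C :=
  ψC ∘ₗ g - g ∘ₗ ψC

/-- `ω(f) = (ψ_C ⊗ Id_C) ∘ f + (Id_C ⊗ ψ_C) ∘ f − f ∘ ψ_C` for `f ∈ Hom(C, C ⊗ C)`. -/
noncomputable def omega2 (ψC : C →ₗ[k] C) (f : C →ₗ[k] C ⊗[k] C) : C →ₗ[k] C ⊗[k] C :=
  LinearMap.rTensor C ψC ∘ₗ f + LinearMap.lTensor C ψC ∘ₗ f - f ∘ₗ ψC

/-- A 1-parameter formal deformation `(Δ_t = Σ Δ_i t^i, ψ_t = Σ ψ_i t^i)` of a Coder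
pair `(C, ψ_C)`: `Δ_0 = Δ`, `ψ_0 = ψ_C`, and for every `k ≥ 0`,
`Σ_{i+j=k} ((Id_C ⊗ Δ_i) ∘ Δ_j − (Δ_i ⊗ Id_C) ∘ Δ_j) = 0` and
`Σ_{i+j=k} (Δ_i ∘ ψ_j − (ψ_i ⊗ Id_C) ∘ Δ_j − (Id_C ⊗ ψ_i) ∘ Δ_j) = 0`. -/
noncomputable def IsFormalDeformation (Δ : C →ₗ[k] C ⊗[k] C) (ψC : C →ₗ[k] C)
    (Δs : ℕ → (C →ₗ[k] C ⊗[k] C)) (ψs : ℕ → (C →ₗ[k] C)) : Prop :=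
  Δs 0 = Δ ∧ ψs 0 = ψC ∧
  (∀ n : ℕ, ∑ p ∈ Finset.HasAntidiagonal.antidiagonal n, LinearMap.lTensor C (Δs p.1) ∘ₗ Δs p.2
      = ∑ p ∈ Finset.HasAntidiagonal.antidiagonal n,
          (TensorProduct.assoc k C C C).toLinearMap ∘ₗ LinearMap.rTensor C (Δs p.1) ∘ₗ Δs p.2) ∧
  (∀ n : ℕ, ∑ p ∈ Finset.HasAntidiagonal.antidiagonal n, Δs p.1 ∘ₗ ψs p.2
      = ∑ p ∈ Finset.HasAntidiagonal.antidiagonal n,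
          (LinearMap.rTensor C (ψs p.1) ∘ₗ Δs p.2 + LinearMap.lTensor C (ψs p.1) ∘ₗ Δs p.2))

namespace IsFormalDeformation

variable {Δ : C →ₗ[k] C ⊗[k] C} {ψC : C →ₗ[k] C} {Δs : ℕ → (C →ₗ[k] C ⊗[k] C)}
  {ψs : ℕ → (C →ₗ[k] C)}

theorem coassoc_first_order (hdef : IsFormalDeformation Δ ψC Δs ψs) :
    LinearMap.lTensor C Δ ∘ₗ Δs 1 + LinearMap.lTensor C (Δs 1) ∘ₗ Δ
      = (TensorProduct.assoc k C C C).toLinearMap ∘ₗ LinearMap.rTensor C Δ ∘ₗ Δs 1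
        + (TensorProduct.assoc k C C C).toLinearMap ∘ₗ LinearMap.rTensor C (Δs 1) ∘ₗ Δ := by
  obtain ⟨hΔ0, -, hcoassoc, -⟩ := hdef
  simpa [Finset.Nat.sum_antidiagonal_succ, hΔ0] using hcoassoc 1

theorem coder_first_order (hdef : IsFormalDeformation Δ ψC Δs ψs) :
    Δ ∘ₗ ψs 1 + Δs 1 ∘ₗ ψC
      = LinearMap.rTensor C ψC ∘ₗ Δs 1 + LinearMap.lTensor C ψC ∘ₗ Δs 1
        + (LinearMap.rTensor C (ψs 1) ∘ₗ Δ + LinearMap.lTensor C (ψs 1) ∘ₗ Δ) := by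
  obtain ⟨hΔ0, hψ0, -, hcoder⟩ := hdef
  simpa [Finset.Nat.sum_antidiagonal_succ, hΔ0, hψ0] using hcoder 1

end IsFormalDeformation

theorem delta2_eq_zero_iff (Δ f : C →ₗ[k] C ⊗[k] C) :
    delta2 Δ f = 0 ↔
      LinearMap.lTensor C Δ ∘ₗ f + LinearMap.lTensor C f ∘ₗ Δ
        = (TensorProduct.assoc k C C C).toLinearMap ∘ₗ LinearMap.rTensor C Δ ∘ₗ f
          + (TensorProduct.assoc k C C C).toLinearMap ∘ₗ LinearMap.rTensor C f ∘ₗ Δ := by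
  rw [delta2, ← sub_eq_zero (a := LinearMap.lTensor C Δ ∘ₗ f + LinearMap.lTensor C f ∘ₗ Δ)]
  convert Iff.rfl using 2
  abel

theorem delta1_add_omega2_eq_zero_iff (Δ f : C →ₗ[k] C ⊗[k] C) (ψC g : C →ₗ[k] C) :
    delta1 Δ g + omega2 ψC f = 0 ↔
      Δ ∘ₗ g + f ∘ₗ ψC
        = LinearMap.rTensor C ψC ∘ₗ f + LinearMap.lTensor C ψC ∘ₗ f
          + (LinearMap.rTensor C g ∘ₗ Δ + LinearMap.lTensor C g ∘ₗ Δ) := by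
  rw [delta1, omega2, eq_comm (a := Δ ∘ₗ g + f ∘ₗ ψC), ← sub_eq_zero (b := Δ ∘ₗ g + f ∘ₗ ψC)]
  convert Iff.rfl using 2
  abel

theorem infinitesimal_is_two_cocycle_general
    (Δ : C →ₗ[k] C ⊗[k] C)
    (ψC : C →ₗ[k] C)
    (Δs : ℕ → (C →ₗ[k] C ⊗[k] C)) (ψs : ℕ → (C →ₗ[k] C))
    (hdef : IsFormalDeformation Δ ψC Δs ψs) :
    delta2 Δ (Δs 1) = 0 ∧ delta1 Δ (ψs 1) + omega2 ψC (Δs 1) = 0 :=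
  ⟨(delta2_eq_zero_iff Δ (Δs 1)).2 hdef.coassoc_first_order,
    (delta1_add_omega2_eq_zero_iff Δ (Δs 1) ψC (ψs 1)).2 hdef.coder_first_order⟩

/-- The infinitesimal `(Δ_1, ψ_1)` of a 1-parameter formal deformation of a Coder pair
`(C, ψ_C)` is a 2-cocycle of the Coder-pair complex with coefficients in the coadjoint
bicomodule: `δ_c(Δ_1) = 0` and `δ_c(ψ_1) + ω(Δ_1) = 0`. -/
theorem infinitesimal_is_two_cocycle [CharZero k]
    (Δ : C →ₗ[k] C ⊗[k] C)
    (hΔ : (TensorProduct.assoc k C C C).toLinearMap ∘ₗ LinearMap.rTensor C Δ ∘ₗ Δ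
        = LinearMap.lTensor C Δ ∘ₗ Δ)
    (ψC : C →ₗ[k] C)
    (hψC : Δ ∘ₗ ψC = LinearMap.rTensor C ψC ∘ₗ Δ + LinearMap.lTensor C ψC ∘ₗ Δ)
    (Δs : ℕ → (C →ₗ[k] C ⊗[k] C)) (ψs : ℕ → (C →ₗ[k] C))
    (hdef : IsFormalDeformation Δ ψC Δs ψs) :
    delta2 Δ (Δs 1) = 0 ∧ delta1 Δ (ψs 1) + omega2 ψC (Δs 1) = 0 :=
  infinitesimal_is_two_cocycle_general Δ ψC Δs ψs hdef
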